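/- Let P₁, P₂, P₃ be affinely independent points in ℝ², let K be the triangle with these vertices, |K| its two-dimensional Lebesgue measure, e = [P₁, P₂] the edge of length |e| = dist(P₁, P₂), and h_K the diameter of K (the longest edge length). Let u : ℝ² → ℝ be continuously differentiable on a neighborhood of K. Then (|K|/|e|) ∫_e u² ds ≤ ∫_K u(x)² dx + h_K (∫_K u(x)² dx)^{1/2} (∫_K |∇u(x)|² dx)^{1/2}, where ∫_e u² ds denotes the line integral ∫₀¹ u(P₁ + t(P₂ − P₁))² |e| dt. -/

import Mathlib

/-!
Parametrize the triangle `K` by the Duffy map `(t, σ) ↦ P₃ + σ • (e t - P₃)`, where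
`e t = P₁ + t • (P₂ - P₁)` runs along the edge; its Jacobian is `σ · 2|K|`. On each ray, the
fundamental theorem of calculus for `σ ↦ σ² f (P₃ + σ • (e t - P₃))` gives
`f (e t) = ∫₀¹ σ (2 f x + ⟨∇f x, x - P₃⟩) dσ`, so integrating over `t` yields the divergence-type
identity `∫_K (2 f + ⟨∇f, x - P₃⟩) = 2|K| ∫₀¹ f (e t) dt`. For `f = u²` the error term is
`2 ∫_K u ⟨∇u, x - P₃⟩`, which `|x - P₃| ≤ h_K` and Cauchy–Schwarz bound.
-/

open MeasureTheory Set
open scoped RealInnerProductSpace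

noncomputable section

local notation "ℝ²" => EuclideanSpace ℝ (Fin 2)

theorem integral_norm_mul_norm_le_sqrt_mul_sqrt {α E F : Type*} [MeasurableSpace α]
    {μ : Measure α} [NormedAddCommGroup E] [NormedAddCommGroup F] {f : α → E} {g : α → F}
    (hf : MemLp f 2 μ) (hg : MemLp g 2 μ) :
    ∫ a, ‖f a‖ * ‖g a‖ ∂μ ≤ √(∫ a, ‖f a‖ ^ 2 ∂μ) * √(∫ a, ‖g a‖ ^ 2 ∂μ) := by
  have h := integral_mul_norm_le_Lp_mul_Lq Real.HolderConjugate.two_two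
    (by simpa using hf.norm) (by simpa using hg.norm)
  simpa only [norm_norm, Real.rpow_two, Real.sqrt_eq_rpow] using h

theorem ContinuousOn.memLp_two_restrict_of_isCompact {X E : Type*} [TopologicalSpace X]
    [MeasurableSpace X] [OpensMeasurableSpace X] [T2Space X] [NormedAddCommGroup E]
    {μ : Measure X} [IsFiniteMeasureOnCompacts μ] {f : X → E} {K : Set X}
    (hf : ContinuousOn f K) (hK : IsCompact K) : MemLp f 2 (μ.restrict K) :=
  (memLp_two_iff_integrable_sq_norm (hf.aestronglyMeasurable_of_isCompact hK
    hK.measurableSet)).2 ((hf.norm.pow 2).integrableOn_compact hK)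

theorem setIntegral_mul_inner_sub_le {F : Type*} [NormedAddCommGroup F] [InnerProductSpace ℝ F]
    [MeasurableSpace F] [OpensMeasurableSpace F] {μ : Measure F} [IsFiniteMeasureOnCompacts μ]
    {K : Set F} (hK : IsCompact K) {p : F} (hp : p ∈ K) {u : F → ℝ} {G : F → F}
    (hu : ContinuousOn u K) (hG : ContinuousOn G K) :
    ∫ x in K, u x * ⟪G x, x - p⟫ ∂μ
      ≤ Metric.diam K * (√(∫ x in K, ‖u x‖ ^ 2 ∂μ) * √(∫ x in K, ‖G x‖ ^ 2 ∂μ)) := by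
  have hbound : ∀ x ∈ K, u x * ⟪G x, x - p⟫ ≤ Metric.diam K * (‖u x‖ * ‖G x‖) := by
    intro x hx
    calc u x * ⟪G x, x - p⟫ ≤ ‖u x‖ * (‖G x‖ * ‖x - p‖) := by
          rw [Real.norm_eq_abs]
          refine (le_abs_self _).trans ?_
          rw [abs_mul]
          gcongr
          exact abs_real_inner_le_norm _ _
      _ ≤ Metric.diam K * (‖u x‖ * ‖G x‖) := by
          rw [← mul_assoc, mul_comm (Metric.diam K), ← dist_eq_norm]
          gcongr
          exact Metric.dist_le_diam_of_mem hK.isBounded hx hp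
  calc ∫ x in K, u x * ⟪G x, x - p⟫ ∂μ ≤ ∫ x in K, Metric.diam K * (‖u x‖ * ‖G x‖) ∂μ :=
        setIntegral_mono_on
          ((hu.mul (hG.inner (continuousOn_id.sub continuousOn_const))).integrableOn_compact hK)
          ((continuousOn_const.mul (hu.norm.mul hG.norm)).integrableOn_compact hK)
          hK.measurableSet hbound
    _ = Metric.diam K * ∫ x in K, ‖u x‖ * ‖G x‖ ∂μ := integral_const_mul _ _
    _ ≤ _ := by
        gcongr
        exact integral_norm_mul_norm_le_sqrt_mul_sqrt (hu.memLp_two_restrict_of_isCompact hK)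
          (hG.memLp_two_restrict_of_isCompact hK)

theorem ContDiffOn.continuousOn_gradient {F : Type*} [NormedAddCommGroup F]
    [InnerProductSpace ℝ F] [CompleteSpace F] {u : F → ℝ} {U : Set F} (hU : IsOpen U)
    (hu : ContDiffOn ℝ 1 u U) : ContinuousOn (gradient u) U :=
  (InnerProductSpace.toDual ℝ F).symm.continuous.comp_continuousOn
    (hu.continuousOn_fderiv_of_isOpen hU le_rfl)

theorem intervalIntegral_mul_two_mul_add_fderiv_eq {E : Type*} [NormedAddCommGroup E]
    [NormedSpace ℝ E] {f : E → ℝ} {U : Set E} (hU : IsOpen U) (hf : ContDiffOn ℝ 1 f U) {p q : E}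
    (hpq : ∀ σ ∈ Icc (0 : ℝ) 1, p + σ • (q - p) ∈ U) :
    ∫ σ in (0 : ℝ)..1, σ * (2 * f (p + σ • (q - p)) + fderiv ℝ f (p + σ • (q - p)) (σ • (q - p)))
      = f q := by
  have hx : ∀ σ : ℝ, HasDerivAt (fun σ : ℝ => p + σ • (q - p)) (q - p) σ := fun σ => by
    simpa using ((hasDerivAt_id σ).smul_const (q - p)).const_add p
  set x : ℝ → E := fun σ => p + σ • (q - p)
  have hderiv : ∀ σ ∈ uIcc (0 : ℝ) 1, HasDerivAt (fun σ => σ ^ 2 * f (x σ))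
      (σ * (2 * f (x σ) + fderiv ℝ f (x σ) (σ • (q - p)))) σ := by
    intro σ hσ
    rw [uIcc_of_le zero_le_one] at hσ
    have hf' : HasFDerivAt f (fderiv ℝ f (x σ)) (x σ) :=
      ((hf.differentiableOn one_ne_zero).differentiableAt (hU.mem_nhds (hpq σ hσ))).hasFDerivAt
    refine ((hasDerivAt_pow 2 σ).mul (hf'.comp_hasDerivAt σ (hx σ))).congr_deriv ?_
    rw [map_smul, smul_eq_mul, Function.comp_apply]
    ring
  have hcont : ContinuousOn (fun σ => σ * (2 * f (x σ) + fderiv ℝ f (x σ) (σ • (q - p))))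
      (uIcc 0 1) := by
    rw [uIcc_of_le zero_le_one]
    have hxc : ContinuousOn x (Icc 0 1) := by fun_prop
    have hfx := hf.continuousOn.comp hxc hpq
    have hdfx := (hf.continuousOn_fderiv_of_isOpen hU le_rfl).comp hxc hpq
    exact continuousOn_id.mul ((continuousOn_const.mul hfx).add
      (hdfx.clm_apply (continuousOn_id.smul continuousOn_const)))
  rw [intervalIntegral.integral_eq_sub_of_hasDerivAt hderiv hcont.intervalIntegrable]
  simp [x]

def prodEquivEuclidean : ℝ × ℝ ≃ᵐ ℝ² :=
  MeasurableEquiv.finTwoArrow.symm.trans (MeasurableEquiv.toLp 2 (Fin 2 → ℝ))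

@[simp]
theorem prodEquivEuclidean_apply_zero (p : ℝ × ℝ) : prodEquivEuclidean p 0 = p.1 := by
  simp [prodEquivEuclidean, MeasurableEquiv.finTwoArrow]

@[simp]
theorem prodEquivEuclidean_apply_one (p : ℝ × ℝ) : prodEquivEuclidean p 1 = p.2 := by
  simp [prodEquivEuclidean, MeasurableEquiv.finTwoArrow]

theorem measurePreserving_prodEquivEuclidean :
    MeasurePreserving prodEquivEuclidean volume volume :=
  ((EuclideanSpace.volume_preserving_symm_measurableEquiv_toLp (Fin 2)).symm _).comp
    ((volume_preserving_finTwoArrow ℝ).symm _)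

theorem setIntegral_Icc_prod_Ioc_eq_intervalIntegral {f : ℝ × ℝ → ℝ}
    (hf : IntegrableOn f (Icc 0 1 ×ˢ Ioc 0 1)) :
    ∫ p in Icc 0 1 ×ˢ Ioc 0 1, f p = ∫ t in (0 : ℝ)..1, ∫ σ in (0 : ℝ)..1, f (t, σ) := by
  rw [Measure.volume_eq_prod] at hf ⊢
  rw [setIntegral_prod f hf, integral_Icc_eq_integral_Ioc,
    intervalIntegral.integral_of_le zero_le_one]
  simp_rw [intervalIntegral.integral_of_le zero_le_one]

section Triangle

variable (P₁ P₂ P₃ : ℝ²)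

def duffy (t σ : ℝ) : ℝ² := P₃ + σ • (P₁ + t • (P₂ - P₁) - P₃)

def crossDet : ℝ := (P₂ - P₁) 0 * (P₁ - P₃) 1 - (P₂ - P₁) 1 * (P₁ - P₃) 0

def duffyFDeriv (x : ℝ²) : ℝ² →L[ℝ] ℝ² :=
  (EuclideanSpace.proj 1 : ℝ² →L[ℝ] ℝ).smulRight (P₁ + x 0 • (P₂ - P₁) - P₃) +
    (x 1 • EuclideanSpace.proj 0 : ℝ² →L[ℝ] ℝ).smulRight (P₂ - P₁)

theorem convexHull_triple_eq_image_duffy :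
    convexHull ℝ {P₁, P₂, P₃} =
      (fun p : ℝ × ℝ => duffy P₁ P₂ P₃ p.1 p.2) '' Icc 0 1 ×ˢ Icc 0 1 := by
  rw [show ({P₁, P₂, P₃} : Set ℝ²) = insert P₃ {P₁, P₂} by rw [pair_comm, insert_comm],
    convexHull_insert (insert_nonempty _ _), convexHull_pair, convexJoin_singleton_left]
  ext x
  simp only [mem_iUnion, segment_eq_image', mem_image, mem_prod, Prod.exists, duffy]
  constructor
  · rintro ⟨_, ⟨t, ht, rfl⟩, σ, hσ, rfl⟩
    exact ⟨t, σ, ⟨ht, hσ⟩, rfl⟩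
  · rintro ⟨t, σ, ⟨ht, hσ⟩, rfl⟩
    exact ⟨_, ⟨t, ht, rfl⟩, σ, hσ, rfl⟩

theorem injOn_duffy (hind : AffineIndependent ℝ ![P₁, P₂, P₃]) :
    InjOn (fun p : ℝ × ℝ => duffy P₁ P₂ P₃ p.1 p.2) {p | 0 < p.2} := by
  set w : ℝ → ℝ → Fin 3 → ℝ := fun t σ => ![σ * (1 - t), σ * t, 1 - σ]
  have hw : ∀ t σ, ∑ i, w t σ i = 1 := fun t σ => by simp [w, Fin.sum_univ_three]; ring
  have hduffy : ∀ t σ, duffy P₁ P₂ P₃ t σ =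
      Finset.univ.affineCombination ℝ ![P₁, P₂, P₃] (w t σ) := fun t σ => by
    rw [Finset.affineCombination_eq_linear_combination _ _ _ (hw t σ)]
    simp [w, Fin.sum_univ_three, duffy]
    module
  rintro ⟨t, σ⟩ hσ ⟨t', σ'⟩ - h
  have hweights := (affineIndependent_iff_eq_of_fintype_affineCombination_eq ℝ _).1 hind _ _
    (hw t σ) (hw t' σ') (by simpa only [hduffy] using h)
  have h1 : σ * t = σ' * t' := by simpa [w] using congrFun hweights 1
  have h2 : σ = σ' := by simpa [w] using congrFun hweights 2
  subst h2
  simp only [Prod.mk.injEq, and_true]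
  exact mul_left_cancel₀ (ne_of_gt hσ) h1

theorem hasFDerivAt_duffy (x : ℝ²) :
    HasFDerivAt (fun y : ℝ² => duffy P₁ P₂ P₃ (y 0) (y 1)) (duffyFDeriv P₁ P₂ P₃ x) x := by
  have h0 := (EuclideanSpace.proj 0 : ℝ² →L[ℝ] ℝ).hasFDerivAt (x := x)
  have h1 := (EuclideanSpace.proj 1 : ℝ² →L[ℝ] ℝ).hasFDerivAt (x := x)
  refine ((h1.smul (((h0.smul_const (P₂ - P₁)).const_add P₁).sub_const P₃)).const_add
    P₃).congr_fderiv ?_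
  ext v i
  simp [duffyFDeriv]
  ring

theorem det_duffyFDeriv (x : ℝ²) : (duffyFDeriv P₁ P₂ P₃ x).det = x 1 * crossDet P₁ P₂ P₃ := by
  rw [ContinuousLinearMap.det, ← LinearMap.det_toMatrix (PiLp.basisFun 2 ℝ (Fin 2)),
    Matrix.det_fin_two]
  simp [LinearMap.toMatrix_apply, duffyFDeriv, crossDet]
  ring

theorem setIntegral_convexHull_triple_eq_duffy (hind : AffineIndependent ℝ ![P₁, P₂, P₃])
    (g : ℝ² → ℝ) :
    ∫ x in convexHull ℝ {P₁, P₂, P₃}, g x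
      = |crossDet P₁ P₂ P₃| * ∫ p in Icc 0 1 ×ˢ Ioc 0 1, p.2 * g (duffy P₁ P₂ P₃ p.1 p.2) := by
  set S : Set (ℝ × ℝ) := Icc 0 1 ×ˢ Ioc 0 1
  set Φ : ℝ² → ℝ² := fun y => duffy P₁ P₂ P₃ (y 0) (y 1)
  have hS : MeasurableSet S := measurableSet_Icc.prod measurableSet_Ioc
  have hcomp : Φ ∘ prodEquivEuclidean = fun p : ℝ × ℝ => duffy P₁ P₂ P₃ p.1 p.2 := by
    ext1 p
    simp [Φ]
  have hinj : InjOn (Φ ∘ prodEquivEuclidean) S :=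
    hcomp ▸ (injOn_duffy P₁ P₂ P₃ hind).mono fun p hp => hp.2.1
  -- `duffy` collapses the side `σ = 0` onto `P₃`, so leaving it out only loses a null set
  have hae : Φ '' (prodEquivEuclidean '' S) =ᵐ[volume] convexHull ℝ {P₁, P₂, P₃} := by
    rw [← image_comp, hcomp, convexHull_triple_eq_image_duffy]
    refine (image_mono (prod_mono subset_rfl Ioc_subset_Icc_self)).eventuallyLE.antisymm ?_
    refine (ae_le_set.2 (measure_mono_null ?_ (measure_singleton P₃)))
    rintro _ ⟨⟨⟨t, σ⟩, ⟨ht, hσ₀, hσ₁⟩, rfl⟩, hnot⟩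
    rcases hσ₀.eq_or_lt with rfl | hσ
    · simp [duffy]
    · exact absurd ⟨(t, σ), ⟨ht, hσ, hσ₁⟩, rfl⟩ hnot
  rw [← setIntegral_congr_set hae,
    integral_image_eq_integral_abs_det_fderiv_smul volume
      (prodEquivEuclidean.measurableEmbedding.measurableSet_image' hS)
      (fun x _ => (hasFDerivAt_duffy P₁ P₂ P₃ x).hasFDerivWithinAt)
      ((prodEquivEuclidean.injective.injOn.comp_iff).1 hinj) g,
    measurePreserving_prodEquivEuclidean.setIntegral_image_emb
      prodEquivEuclidean.measurableEmbedding, ← integral_const_mul]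
  refine setIntegral_congr_fun hS fun p hp => ?_
  simp [det_duffyFDeriv, abs_mul, abs_of_pos hp.2.1]
  ring

theorem setIntegral_convexHull_triple_two_mul_add_fderiv
    (hind : AffineIndependent ℝ ![P₁, P₂, P₃]) {f : ℝ² → ℝ} {U : Set ℝ²} (hU : IsOpen U)
    (hKU : convexHull ℝ {P₁, P₂, P₃} ⊆ U) (hf : ContDiffOn ℝ 1 f U) :
    ∫ x in convexHull ℝ {P₁, P₂, P₃}, (2 * f x + fderiv ℝ f x (x - P₃))
      = |crossDet P₁ P₂ P₃| * ∫ t in (0 : ℝ)..1, f (P₁ + t • (P₂ - P₁)) := by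
  have hmaps : MapsTo (fun p : ℝ × ℝ => duffy P₁ P₂ P₃ p.1 p.2) (Icc 0 1 ×ˢ Icc 0 1) U :=
    fun p hp => hKU (convexHull_triple_eq_image_duffy P₁ P₂ P₃ ▸ mem_image_of_mem _ hp)
  have hcont : ContinuousOn (fun p : ℝ × ℝ => p.2 * (2 * f (duffy P₁ P₂ P₃ p.1 p.2)
      + fderiv ℝ f (duffy P₁ P₂ P₃ p.1 p.2) (duffy P₁ P₂ P₃ p.1 p.2 - P₃)))
      (Icc 0 1 ×ˢ Icc 0 1) := by
    have hduffy : Continuous fun p : ℝ × ℝ => duffy P₁ P₂ P₃ p.1 p.2 := by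
      unfold duffy; fun_prop
    have hfd := (hf.continuousOn_fderiv_of_isOpen hU le_rfl).comp hduffy.continuousOn hmaps
    exact continuousOn_snd.mul
      ((continuousOn_const.mul (hf.continuousOn.comp hduffy.continuousOn hmaps)).add
        (hfd.clm_apply (hduffy.sub continuous_const).continuousOn))
  have hint :=
    (hcont.integrableOn_compact (μ := volume) (isCompact_Icc.prod isCompact_Icc)).mono_set
      (prod_mono subset_rfl Ioc_subset_Icc_self)
  rw [setIntegral_convexHull_triple_eq_duffy P₁ P₂ P₃ hind,
    setIntegral_Icc_prod_Ioc_eq_intervalIntegral hint]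
  congr 1
  refine intervalIntegral.integral_congr fun t ht => ?_
  rw [uIcc_of_le zero_le_one] at ht
  simp only [duffy, add_sub_cancel_left]
  exact intervalIntegral_mul_two_mul_add_fderiv_eq hU hf fun σ hσ => hmaps (mk_mem_prod ht hσ)

theorem two_mul_volume_convexHull_triple (hind : AffineIndependent ℝ ![P₁, P₂, P₃]) :
    2 * (volume (convexHull ℝ {P₁, P₂, P₃})).toReal = |crossDet P₁ P₂ P₃| := by
  simpa [Measure.real, mul_comm] using
    setIntegral_convexHull_triple_two_mul_add_fderiv P₁ P₂ P₃ hind isOpen_univ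
      (subset_univ _) (contDiffOn_const (c := (1 : ℝ)))

theorem volume_mul_intervalIntegral_sq_eq (hind : AffineIndependent ℝ ![P₁, P₂, P₃])
    {u : ℝ² → ℝ} {U : Set ℝ²} (hU : IsOpen U) (hKU : convexHull ℝ {P₁, P₂, P₃} ⊆ U)
    (hu : ContDiffOn ℝ 1 u U) :
    (volume (convexHull ℝ {P₁, P₂, P₃})).toReal * ∫ t in (0 : ℝ)..1, u (P₁ + t • (P₂ - P₁)) ^ 2
      = (∫ x in convexHull ℝ {P₁, P₂, P₃}, u x ^ 2)
        + ∫ x in convexHull ℝ {P₁, P₂, P₃}, u x * ⟪gradient u x, x - P₃⟫ := by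
  have hK : IsCompact (convexHull ℝ {P₁, P₂, P₃}) :=
    (toFinite _).isCompact_convexHull (𝕜 := ℝ)
  set K := convexHull ℝ {P₁, P₂, P₃}
  have hfderiv : ∀ x ∈ K, 2 * u x ^ 2 + fderiv ℝ (fun y => u y ^ 2) x (x - P₃)
      = 2 * (u x ^ 2 + u x * ⟪gradient u x, x - P₃⟫) := by
    intro x hx
    have hdiff : DifferentiableAt ℝ u x :=
      (hu.differentiableOn one_ne_zero).differentiableAt (hU.mem_nhds (hKU hx))
    rw [(HasFDerivAt.pow hdiff.hasFDerivAt 2).fderiv]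
    simp [gradient, InnerProductSpace.toDual_symm_apply]
    ring
  have hu2 : ContinuousOn (fun x => u x ^ 2) K := (hu.continuousOn.mono hKU).pow 2
  have hugrad : ContinuousOn (fun x => u x * ⟪gradient u x, x - P₃⟫) K :=
    (hu.continuousOn.mono hKU).mul
      (((hu.continuousOn_gradient hU).mono hKU).inner (continuousOn_id.sub continuousOn_const))
  have h := setIntegral_convexHull_triple_two_mul_add_fderiv P₁ P₂ P₃ hind hU hKU (hu.pow 2)
  rw [setIntegral_congr_fun hK.measurableSet hfderiv, integral_const_mul,
    integral_add (hu2.integrableOn_compact hK) (hugrad.integrableOn_compact hK),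
    ← two_mul_volume_convexHull_triple P₁ P₂ P₃ hind] at h
  linarith

end Triangle

end

/-- Intermediate trace bound in the proof of Theorem 4.1: for the triangle `K` with
vertices `P₁, P₂, P₃`, edge `e = [P₁, P₂]` and diameter `h_K`, and `u` continuously
differentiable on a neighborhood of `K`,
`(|K|/|e|) ∫_e u² ds ≤ ∫_K u² + h_K (∫_K u²)^{1/2} (∫_K |∇u|²)^{1/2}`. -/
theorem intermediate_trace_bound
    (P₁ P₂ P₃ : EuclideanSpace ℝ (Fin 2))
    (hind : AffineIndependent ℝ ![P₁, P₂, P₃])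
    (u : EuclideanSpace ℝ (Fin 2) → ℝ)
    (U : Set (EuclideanSpace ℝ (Fin 2))) (hU : IsOpen U)
    (hKU : convexHull ℝ {P₁, P₂, P₃} ⊆ U)
    (hu : ContDiffOn ℝ 1 u U) :
    ((volume (convexHull ℝ {P₁, P₂, P₃})).toReal / dist P₁ P₂)
        * (∫ t in (0:ℝ)..1, u (P₁ + t • (P₂ - P₁)) ^ 2 * dist P₁ P₂)
      ≤ (∫ x in convexHull ℝ {P₁, P₂, P₃}, u x ^ 2)
        + Metric.diam (convexHull ℝ ({P₁, P₂, P₃} : Set (EuclideanSpace ℝ (Fin 2))))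
          * Real.sqrt (∫ x in convexHull ℝ {P₁, P₂, P₃}, u x ^ 2)
          * Real.sqrt (∫ x in convexHull ℝ {P₁, P₂, P₃}, ‖gradient u x‖ ^ 2) := by
  have hK : IsCompact (convexHull ℝ {P₁, P₂, P₃}) := (toFinite _).isCompact_convexHull (𝕜 := ℝ)
  have hP₃ : P₃ ∈ convexHull ℝ {P₁, P₂, P₃} := subset_convexHull ℝ _ (by simp)
  have hdist : dist P₁ P₂ ≠ 0 := dist_ne_zero.2 (hind.injective.ne (by decide : (0 : Fin 3) ≠ 1))
  calc _ = (volume (convexHull ℝ {P₁, P₂, P₃})).toReal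
          * ∫ t in (0 : ℝ)..1, u (P₁ + t • (P₂ - P₁)) ^ 2 := by
        rw [intervalIntegral.integral_mul_const]
        field_simp
    _ = (∫ x in convexHull ℝ {P₁, P₂, P₃}, u x ^ 2)
          + ∫ x in convexHull ℝ {P₁, P₂, P₃}, u x * ⟪gradient u x, x - P₃⟫ :=
        volume_mul_intervalIntegral_sq_eq P₁ P₂ P₃ hind hU hKU hu
    _ ≤ _ := by
        have h := setIntegral_mul_inner_sub_le (μ := volume) hK hP₃ (hu.continuousOn.mono hKU)
          ((hu.continuousOn_gradient hU).mono hKU)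
        simp only [Real.norm_eq_abs, sq_abs] at h
        linarith
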